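/- (Merge or Leave) For each Q ∈ ℳ, with P-probability 1 over sequences sampled from P, at least one of the following holds: lim_{t→∞} w(Q | x_{<t}) = 0, or lim_{t→∞} d(P, Q | x_{<t}) = 0. -/

import Mathlib

open MeasureTheory Filter

/-- The cylinder set of infinite sequences agreeing with `x` on the first `t` coordinates,
i.e. the set of sequences beginning with the prefix `x_{<t}`. -/
def cyl {X : Type*} (x : ℕ → X) (t : ℕ) : Set (ℕ → X) := {y | ∀ i < t, y i = x i}

/-- `Q(x_{<t})`: the `Q`-measure of the cylinder set of sequences beginning with `x_{<t}`,
as a real number. -/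
noncomputable def prefProb {X : Type*} [MeasurableSpace X]
    (Q : Measure (ℕ → X)) (x : ℕ → X) (t : ℕ) : ℝ :=
  (Q (cyl x t)).toReal

/-- The posterior weight `w(Q i | x_{<t}) = w(Q i)·(Q i)(x_{<t}) / ∑_{j} w(Q j)·(Q j)(x_{<t})`. -/
noncomputable def post {X ι : Type*} [MeasurableSpace X]
    (w : ι → ℝ) (Q : ι → Measure (ℕ → X)) (i : ι) (x : ℕ → X) (t : ℕ) : ℝ :=
  w i * prefProb (Q i) x t / ∑' j, w j * prefProb (Q j) x t

/-- `Q(ℰ | x_{<t})`: the conditional probability, given the prefix `x_{<t}`, that the next `k`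
symbols form a string belonging to `ℰ ⊆ 𝒳^k`. -/
noncomputable def condProb {X : Type*} [MeasurableSpace X]
    (Q : Measure (ℕ → X)) (x : ℕ → X) (t k : ℕ) (E : Set (Fin k → X)) : ℝ :=
  (Q {y | y ∈ cyl x t ∧ (fun j : Fin k => y (t + j)) ∈ E}).toReal / prefProb Q x t

/-- The `k`-step variation distance
`d_k(P, Q | x_{<t}) = max_{ℰ ⊆ 𝒳^k} |P(ℰ | x_{<t}) − Q(ℰ | x_{<t})|`. -/
noncomputable def dk {X : Type*} [MeasurableSpace X]
    (P Q : Measure (ℕ → X)) (x : ℕ → X) (t k : ℕ) : ℝ :=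
  ⨆ E : Set (Fin k → X), |condProb P x t k E - condProb Q x t k E|

/-- The total variation distance `d(P, Q | x_{<t}) = lim_{k→∞} d_k(P, Q | x_{<t})`; since
`d_k` is non-decreasing in `k` and bounded by 1, the limit equals the supremum over `k`. -/
noncomputable def dTV {X : Type*} [MeasurableSpace X]
    (P Q : Measure (ℕ → X)) (x : ℕ → X) (t : ℕ) : ℝ :=
  ⨆ k : ℕ, dk P Q x t k

/-!
Work relative to the Bayes mixture `ξ = ∑ w_j Q_j`, with respect to which `P` and `Q` have
densities `Z_P, Z_Q ≤ 1 / w`. The cylinder ratio `P(x_{<t}) / ξ(x_{<t})` is the conditional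
expectation of `Z_P` given the first `t` symbols, so by Lévy's upward theorem it tends to
`Z_P(x)`; Hunt's lemma then shows that the mean absolute deviation of `Z_P` from this ratio on the
cylinder of `x_{<t}` tends to `0` as well. The posterior weight of `Q` is `w(Q)` times its cylinder
ratio, so it tends to `w(Q) Z_Q(x)`, and it leaves when `Z_Q(x) = 0`. Otherwise, as `Z_P > 0`
`P`-almost surely, the total variation distance between the two conditional laws, which is at most
the sum of the two deviations divided by the two ratios, tends to `0`.
-/

open scoped Topology

namespace MergeOrLeave

section Prefix

variable {X : Type*}

def prefixMap (t : ℕ) (y : ℕ → X) : Fin t → X := fun j => y j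

lemma cyl_eq_preimage_prefixMap (x : ℕ → X) (t : ℕ) :
    cyl x t = prefixMap t ⁻¹' {prefixMap t x} := by
  ext y
  simp only [cyl, Set.mem_ofPred_eq, Set.mem_preimage, Set.mem_singleton_iff, funext_iff,
    prefixMap, Fin.forall_iff]

lemma cyl_eq_of_mem {x y : ℕ → X} {t : ℕ} (hy : y ∈ cyl x t) : cyl y t = cyl x t := by
  ext z
  exact forall₂_congr fun i hi => by rw [hy i hi]

variable [MeasurableSpace X]

lemma measurable_prefixMap (t : ℕ) : Measurable (prefixMap (X := X) t) :=
  measurable_pi_lambda _ fun j => measurable_pi_apply (j : ℕ)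

variable (X) in
def prefixFiltration : Filtration ℕ (MeasurableSpace.pi : MeasurableSpace (ℕ → X)) where
  seq t := MeasurableSpace.comap (prefixMap t) MeasurableSpace.pi
  mono' s t hst := by
    rintro _ ⟨B, hB, rfl⟩
    exact ⟨(fun v j => v (Fin.castLE hst j)) ⁻¹' B, by measurability, rfl⟩
  le' t := (measurable_prefixMap t).comap_le

lemma iSup_prefixFiltration :
    ⨆ t, prefixFiltration X t = (MeasurableSpace.pi : MeasurableSpace (ℕ → X)) := by
  refine le_antisymm (iSup_le (prefixFiltration X).le) (iSup_le fun n => ?_)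
  rintro _ ⟨B, hB, rfl⟩
  exact le_iSup (prefixFiltration X ·) (n + 1) _
    ⟨(fun v => v (Fin.last n)) ⁻¹' B, measurable_pi_apply _ hB, rfl⟩

lemma eq_of_mem_cyl_of_measurable {β : Type*} [MeasurableSpace β] [MeasurableSingletonClass β]
    {g : (ℕ → X) → β} {t : ℕ} (hg : Measurable[prefixFiltration X t] g) {x y : ℕ → X}
    (hy : y ∈ cyl x t) : g y = g x := by
  obtain ⟨S, -, hS⟩ : ∃ S, MeasurableSet S ∧ prefixMap t ⁻¹' S = g ⁻¹' {g x} :=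
    hg (measurableSet_singleton _)
  have hxS : x ∈ prefixMap t ⁻¹' S := hS ▸ rfl
  rw [cyl_eq_preimage_prefixMap] at hy
  have hyS : y ∈ prefixMap t ⁻¹' S := by
    rw [Set.mem_preimage, show prefixMap t y = prefixMap t x from hy]; exact hxS
  rwa [hS] at hyS

variable [MeasurableSingletonClass X]

lemma measurableSet_cyl_prefixFiltration (x : ℕ → X) (t : ℕ) :
    MeasurableSet[prefixFiltration X t] (cyl x t) := by
  rw [cyl_eq_preimage_prefixMap]
  exact comap_measurable (prefixMap t) (measurableSet_singleton _)

lemma measurableSet_cyl (x : ℕ → X) (t : ℕ) : MeasurableSet (cyl x t) :=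
  (prefixFiltration X).le t _ (measurableSet_cyl_prefixFiltration x t)

end Prefix

lemma tendsto_iSup_add_of_tendsto_zero {u : ℕ → ℝ} (hu0 : ∀ n, 0 ≤ u n)
    (hu : Tendsto u atTop (𝓝 0)) : Tendsto (fun m => ⨆ s, u (m + s)) atTop (𝓝 0) := by
  refine tendsto_order.2 ⟨fun a ha => Eventually.of_forall fun m =>
    ha.trans_le (Real.iSup_nonneg fun s => hu0 _), fun a ha => ?_⟩
  obtain ⟨b, hb0, hba⟩ := exists_between ha
  obtain ⟨N, hN⟩ := eventually_atTop.1 (hu.eventually (gt_mem_nhds hb0))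
  filter_upwards [eventually_ge_atTop N] with m hm
  exact (ciSup_le fun s => (hN (m + s) (by omega)).le).trans_lt hba

section CylinderAverage

variable {X : Type*} [MeasurableSpace X] (ξ : Measure (ℕ → X))

noncomputable def cylAvg (f : (ℕ → X) → ℝ) (t : ℕ) (x : ℕ → X) : ℝ :=
  (∫ y in cyl x t, f y ∂ξ) / ξ.real (cyl x t)

variable {ξ}

lemma ae_measure_cyl_ne_zero [Countable X] (t : ℕ) : ∀ᵐ x ∂ξ, ξ (cyl x t) ≠ 0 := by
  have hnull : {x | ξ (cyl x t) = 0} = ⋃ v ∈ {v | ξ (prefixMap t ⁻¹' {v}) = 0},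
      prefixMap t ⁻¹' {v} := by
    ext x
    simp [cyl_eq_preimage_prefixMap]
  rw [ae_iff]
  simp only [not_not, hnull]
  exact (measure_biUnion_null_iff (Set.to_countable _)).2 fun v hv => hv

variable [MeasurableSingletonClass X]

lemma cylAvg_congr {f g : (ℕ → X) → ℝ} {t : ℕ} {x : ℕ → X}
    (h : ∀ y ∈ cyl x t, f y = g y) : cylAvg ξ f t x = cylAvg ξ g t x := by
  rw [cylAvg, cylAvg, setIntegral_congr_fun (measurableSet_cyl x t) h]

lemma cylAvg_mono {f g : (ℕ → X) → ℝ} {t : ℕ} {x : ℕ → X}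
    (hf : IntegrableOn f (cyl x t) ξ) (hg : IntegrableOn g (cyl x t) ξ)
    (h : ∀ y ∈ cyl x t, f y ≤ g y) : cylAvg ξ f t x ≤ cylAvg ξ g t x :=
  div_le_div_of_nonneg_right (setIntegral_mono_on hf hg (measurableSet_cyl x t) h)
    measureReal_nonneg

lemma cylAvg_nonneg {f : (ℕ → X) → ℝ} {t : ℕ} {x : ℕ → X}
    (hf : ∀ y, 0 ≤ f y) : 0 ≤ cylAvg ξ f t x :=
  div_nonneg (setIntegral_nonneg (measurableSet_cyl x t) fun y _ => hf y) measureReal_nonneg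

variable [Countable X] [IsFiniteMeasure ξ]

lemma condExp_ae_eq_cylAvg {f : (ℕ → X) → ℝ} (hf : Integrable f ξ) (t : ℕ) :
    ξ[f | prefixFiltration X t] =ᵐ[ξ] cylAvg ξ f t := by
  filter_upwards [ae_measure_cyl_ne_zero t] with x hx
  set g := ξ[f | prefixFiltration X t]
  have hconst : ∀ y ∈ cyl x t, g y = g x := fun y =>
    eq_of_mem_cyl_of_measurable stronglyMeasurable_condExp.measurable
  have hint : ∫ y in cyl x t, g y ∂ξ = ∫ y in cyl x t, f y ∂ξ :=
    setIntegral_condExp _ hf (measurableSet_cyl_prefixFiltration x t)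
  rw [setIntegral_congr_fun (measurableSet_cyl x t) hconst, setIntegral_const, smul_eq_mul] at hint
  rw [cylAvg, ← hint, mul_div_cancel_left₀]
  exact (ENNReal.toReal_pos hx (measure_ne_top _ _)).ne'

lemma ae_tendsto_cylAvg {f : (ℕ → X) → ℝ} (hf : Integrable f ξ) :
    ∀ᵐ x ∂ξ, Tendsto (fun t => cylAvg ξ f t x) atTop (𝓝 (f x)) := by
  have hmk : StronglyMeasurable[⨆ t, prefixFiltration X t] hf.1.mk := by
    rw [iSup_prefixFiltration]; exact hf.1.stronglyMeasurable_mk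
  have hlim := (hf.congr hf.1.ae_eq_mk).tendsto_ae_condExp hmk
  have hcond : ∀ᵐ x ∂ξ, ∀ t, ξ[hf.1.mk | prefixFiltration X t] x = cylAvg ξ f t x :=
    ae_all_iff.2 fun t => (condExp_congr_ae hf.1.ae_eq_mk.symm).trans
      (condExp_ae_eq_cylAvg hf t)
  filter_upwards [hlim, hcond, hf.1.ae_eq_mk] with x hx hxt hfx
  rw [hfx]
  simpa only [hxt] using hx

/-- Hunt's lemma for cylinder averages: for `t ≥ m` the function `f t` lies below
`G m = sup_{s ≥ m} f s`, whose cylinder averages tend to `G m x` by Lévy's upward theorem, and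
`G m x → 0`. -/
theorem ae_tendsto_cylAvg_zero_of_dominated {f : ℕ → (ℕ → X) → ℝ} {g : (ℕ → X) → ℝ}
    (hf : ∀ t, Measurable (f t)) (hf0 : ∀ t y, 0 ≤ f t y) (hfg : ∀ t y, f t y ≤ g y)
    (hg : Integrable g ξ)
    (hlim : ∀ᵐ y ∂ξ, Tendsto (fun t => f t y) atTop (𝓝 0)) :
    ∀ᵐ x ∂ξ, Tendsto (fun t => cylAvg ξ (f t) t x) atTop (𝓝 0) := by
  set G : ℕ → (ℕ → X) → ℝ := fun m y => ⨆ s, f (m + s) y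
  have hbdd : ∀ m y, BddAbove (Set.range fun s => f (m + s) y) := fun m y =>
    ⟨g y, by rintro _ ⟨s, rfl⟩; exact hfg _ _⟩
  have hG0 : ∀ m y, 0 ≤ G m y := fun m y => Real.iSup_nonneg fun s => hf0 _ _
  have hfG : ∀ {m t}, m ≤ t → ∀ y, f t y ≤ G m y := fun {m t} hmt y => by
    simpa [G, Nat.add_sub_cancel' hmt] using le_ciSup (hbdd m y) (t - m)
  have hGint : ∀ m, Integrable (G m) ξ := fun m =>
    hg.mono' (Measurable.iSup fun s => hf _).aestronglyMeasurable (ae_of_all _ fun y => by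
      rw [Real.norm_of_nonneg (hG0 m y)]; exact ciSup_le fun s => hfg _ _)
  have hfint : ∀ t, Integrable (f t) ξ := fun t =>
    hg.mono' (hf t).aestronglyMeasurable (ae_of_all _ fun y => by
      rw [Real.norm_of_nonneg (hf0 t y)]; exact hfg t y)
  have hGlim : ∀ᵐ x ∂ξ, ∀ m, Tendsto (fun t => cylAvg ξ (G m) t x) atTop (𝓝 (G m x)) :=
    ae_all_iff.2 fun m => ae_tendsto_cylAvg (hGint m)
  filter_upwards [hGlim, hlim] with x hGx hx
  refine tendsto_order.2 ⟨fun a ha => Eventually.of_forall fun t =>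
    ha.trans_le (cylAvg_nonneg (hf0 t)), fun a ha => ?_⟩
  obtain ⟨m, hm⟩ :=
    ((tendsto_iSup_add_of_tendsto_zero (hf0 · x) hx).eventually (gt_mem_nhds ha)).exists
  filter_upwards [(hGx m).eventually (gt_mem_nhds hm), eventually_ge_atTop m] with t ht hmt
  exact (cylAvg_mono (hfint t).integrableOn (hGint m).integrableOn
    fun y _ => hfG hmt y).trans_lt ht

end CylinderAverage

section CylinderRatio

variable {X : Type*} [MeasurableSpace X] (μ ν : Measure (ℕ → X))

noncomputable def cylRatio (t : ℕ) (x : ℕ → X) : ℝ := μ.real (cyl x t) / ν.real (cyl x t)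

variable {μ ν}

lemma cylRatio_eq_of_mem {t : ℕ} {x y : ℕ → X} (hy : y ∈ cyl x t) :
    cylRatio μ ν t y = cylRatio μ ν t x := by
  rw [cylRatio, cylRatio, cyl_eq_of_mem hy]

lemma cylRatio_nonneg (t : ℕ) (x : ℕ → X) : 0 ≤ cylRatio μ ν t x :=
  div_nonneg measureReal_nonneg measureReal_nonneg

lemma cylRatio_le {C : ℝ} (hC0 : 0 ≤ C) (hC : ∀ s, μ.real s ≤ C * ν.real s) (t : ℕ)
    (x : ℕ → X) : cylRatio μ ν t x ≤ C :=
  div_le_of_le_mul₀ measureReal_nonneg hC0 (hC _)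

lemma measurable_cylRatio [Countable X] [MeasurableSingletonClass X] (t : ℕ) :
    Measurable (cylRatio μ ν t) := by
  have : cylRatio μ ν t =
      (fun v => μ.real (prefixMap t ⁻¹' {v}) / ν.real (prefixMap t ⁻¹' {v})) ∘ prefixMap t := by
    funext x; simp only [cylRatio, Function.comp_apply, cyl_eq_preimage_prefixMap]
  rw [this]
  exact (measurable_of_countable _).comp (measurable_prefixMap t)

variable [IsFiniteMeasure μ] [IsFiniteMeasure ν]

lemma cylRatio_eq_cylAvg_rnDeriv (hac : μ ≪ ν) (t : ℕ) (x : ℕ → X) :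
    cylRatio μ ν t x = cylAvg ν (fun y => (μ.rnDeriv ν y).toReal) t x := by
  rw [cylAvg, Measure.setIntegral_toReal_rnDeriv hac, cylRatio]

variable (μ ν) in
noncomputable def cylDeviation (t : ℕ) (x : ℕ → X) : ℝ :=
  cylAvg ν (fun y => |(μ.rnDeriv ν y).toReal - cylRatio μ ν t x|) t x

variable [Countable X] [MeasurableSingletonClass X]

lemma ae_tendsto_cylRatio (hac : μ ≪ ν) :
    ∀ᵐ x ∂ν, Tendsto (cylRatio μ ν · x) atTop (𝓝 (μ.rnDeriv ν x).toReal) := by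
  simpa only [cylRatio_eq_cylAvg_rnDeriv hac] using
    ae_tendsto_cylAvg Measure.integrable_toReal_rnDeriv

lemma ae_tendsto_cylDeviation (hac : μ ≪ ν) {C : ℝ} (hC0 : 0 ≤ C)
    (hC : ∀ s, μ.real s ≤ C * ν.real s) :
    ∀ᵐ x ∂ν, Tendsto (cylDeviation μ ν · x) atTop (𝓝 0) := by
  have hZ := Measure.measurable_rnDeriv μ ν |>.ennreal_toReal
  have hdev := ae_tendsto_cylAvg_zero_of_dominated
    (f := fun t y => |(μ.rnDeriv ν y).toReal - cylRatio μ ν t y|)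
    (g := fun y => (μ.rnDeriv ν y).toReal + C)
    (fun t => (hZ.sub (measurable_cylRatio t)).abs) (fun t y => abs_nonneg _)
    (fun t y => abs_sub_le_iff.2 ⟨by linarith [cylRatio_nonneg (μ := μ) (ν := ν) t y],
      by linarith [cylRatio_le hC0 hC t y, (μ.rnDeriv ν y).toReal_nonneg]⟩)
    (Measure.integrable_toReal_rnDeriv.add (integrable_const C)) ?_
  · filter_upwards [hdev] with x hx
    refine hx.congr fun t => cylAvg_congr fun y hy => ?_
    rw [cylRatio_eq_of_mem hy]
  · filter_upwards [ae_tendsto_cylRatio hac] with y hy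
    simpa using (hy.const_sub (μ.rnDeriv ν y).toReal).abs

end CylinderRatio

section TotalVariation

variable {X : Type*} [MeasurableSpace X] {P Q ξ : Measure (ℕ → X)}

lemma dTV_nonneg (x : ℕ → X) (t : ℕ) : 0 ≤ dTV P Q x t :=
  Real.iSup_nonneg fun _ => Real.iSup_nonneg fun _ => abs_nonneg _

lemma setIntegral_abs_div_sub_eq {t : ℕ} {x : ℕ → X} (hpos : 0 < cylRatio P ξ t x) :
    ∫ y in cyl x t, |(P.rnDeriv ξ y).toReal / P.real (cyl x t) - 1 / ξ.real (cyl x t)| ∂ξ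
      = cylDeviation P ξ t x / cylRatio P ξ t x := by
  set r := cylRatio P ξ t x
  have hn : 0 < ξ.real (cyl x t) :=
    measureReal_nonneg.lt_of_ne fun h => by simp [r, cylRatio, ← h] at hpos
  have hPc : P.real (cyl x t) = r * ξ.real (cyl x t) := (div_mul_cancel₀ _ hn.ne').symm
  have hpt : ∀ y, |(P.rnDeriv ξ y).toReal / P.real (cyl x t) - 1 / ξ.real (cyl x t)|
      = |(P.rnDeriv ξ y).toReal - r| / (r * ξ.real (cyl x t)) := fun y => by
    rw [hPc, ← abs_of_pos (mul_pos hpos hn), ← abs_div, abs_of_pos (mul_pos hpos hn)]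
    congr 1
    field_simp
  simp_rw [hpt, integral_div, cylDeviation, cylAvg, div_div, mul_comm]
  rfl

variable [IsFiniteMeasure P] [IsFiniteMeasure Q] [IsFiniteMeasure ξ]

lemma condProb_eq_setIntegral (hP : P ≪ ξ) (x : ℕ → X) (t k : ℕ) (E : Set (Fin k → X)) :
    condProb P x t k E = ∫ y in {y | y ∈ cyl x t ∧ (fun j : Fin k => y (t + j)) ∈ E},
      (P.rnDeriv ξ y).toReal / P.real (cyl x t) ∂ξ := by
  rw [integral_div, Measure.setIntegral_toReal_rnDeriv hP]
  rfl

lemma dTV_le_setIntegral (hP : P ≪ ξ) (hQ : Q ≪ ξ) (x : ℕ → X) (t : ℕ) :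
    dTV P Q x t ≤ ∫ y in cyl x t, |(P.rnDeriv ξ y).toReal / P.real (cyl x t)
      - (Q.rnDeriv ξ y).toReal / Q.real (cyl x t)| ∂ξ := by
  have hint : Integrable (fun y =>
      (P.rnDeriv ξ y).toReal / P.real (cyl x t) - (Q.rnDeriv ξ y).toReal / Q.real (cyl x t)) ξ :=
    (Measure.integrable_toReal_rnDeriv.div_const _).sub
      (Measure.integrable_toReal_rnDeriv.div_const _)
  refine ciSup_le fun k => ciSup_le fun E => ?_
  rw [condProb_eq_setIntegral hP, condProb_eq_setIntegral hQ,
    ← integral_sub (Measure.integrable_toReal_rnDeriv.div_const _).integrableOn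
      (Measure.integrable_toReal_rnDeriv.div_const _).integrableOn]
  refine (abs_integral_le_integral_abs).trans (setIntegral_mono_set hint.abs.integrableOn
    (ae_of_all _ fun _ => abs_nonneg _) (Eventually.of_forall fun y hy => hy.1))

lemma dTV_le_cylDeviation (hP : P ≪ ξ) (hQ : Q ≪ ξ) {t : ℕ} {x : ℕ → X}
    (hPpos : 0 < cylRatio P ξ t x) (hQpos : 0 < cylRatio Q ξ t x) :
    dTV P Q x t ≤
      cylDeviation P ξ t x / cylRatio P ξ t x + cylDeviation Q ξ t x / cylRatio Q ξ t x := by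
  have hint : ∀ μ : Measure (ℕ → X), [IsFiniteMeasure μ] → IntegrableOn (fun y =>
      |(μ.rnDeriv ξ y).toReal / μ.real (cyl x t) - 1 / ξ.real (cyl x t)|) (cyl x t) ξ :=
    fun μ _ => ((Measure.integrable_toReal_rnDeriv.div_const _).sub
      (integrable_const _)).abs.integrableOn
  calc dTV P Q x t
      ≤ ∫ y in cyl x t, |(P.rnDeriv ξ y).toReal / P.real (cyl x t)
          - (Q.rnDeriv ξ y).toReal / Q.real (cyl x t)| ∂ξ := dTV_le_setIntegral hP hQ x t
    _ ≤ ∫ y in cyl x t, (|(P.rnDeriv ξ y).toReal / P.real (cyl x t) - 1 / ξ.real (cyl x t)|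
          + |(Q.rnDeriv ξ y).toReal / Q.real (cyl x t) - 1 / ξ.real (cyl x t)|) ∂ξ := by
        refine setIntegral_mono (((Measure.integrable_toReal_rnDeriv.div_const _).sub
          (Measure.integrable_toReal_rnDeriv.div_const _)).abs.integrableOn)
          ((hint P).add (hint Q)) fun y => ?_
        have := abs_sub_le ((P.rnDeriv ξ y).toReal / P.real (cyl x t)) (1 / ξ.real (cyl x t))
          ((Q.rnDeriv ξ y).toReal / Q.real (cyl x t))
        rwa [abs_sub_comm (1 / _)] at this
    _ = _ := by
        rw [integral_add (hint P) (hint Q), setIntegral_abs_div_sub_eq hPpos,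
          setIntegral_abs_div_sub_eq hQpos]

lemma tendsto_dTV_zero (hP : P ≪ ξ) (hQ : Q ≪ ξ) {x : ℕ → X} {a b : ℝ}
    (ha : 0 < a) (hb : 0 < b)
    (hrP : Tendsto (fun t => cylRatio P ξ t x) atTop (𝓝 a))
    (hrQ : Tendsto (fun t => cylRatio Q ξ t x) atTop (𝓝 b))
    (hdP : Tendsto (cylDeviation P ξ · x) atTop (𝓝 0))
    (hdQ : Tendsto (cylDeviation Q ξ · x) atTop (𝓝 0)) :
    Tendsto (fun t => dTV P Q x t) atTop (𝓝 0) := by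
  have hbound := (hdP.div hrP ha.ne').add (hdQ.div hrQ hb.ne')
  rw [zero_div, zero_div, add_zero] at hbound
  refine tendsto_of_tendsto_of_tendsto_of_le_of_le' tendsto_const_nhds hbound
    (Eventually.of_forall fun t => dTV_nonneg x t) ?_
  filter_upwards [hrP.eventually (lt_mem_nhds ha), hrQ.eventually (lt_mem_nhds hb)] with t hPt hQt
  exact dTV_le_cylDeviation hP hQ hPt hQt

end TotalVariation

section Mixture

variable {X ι : Type*} [MeasurableSpace X] (Q : ι → Measure (ℕ → X)) (w : ι → ℝ)

noncomputable def bayesMixture : Measure (ℕ → X) :=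
  Measure.sum fun j => ENNReal.ofReal (w j) • Q j

variable {Q w}

lemma isProbabilityMeasure_bayesMixture (hQ : ∀ i, IsProbabilityMeasure (Q i))
    (hw : ∀ i, 0 ≤ w i) (hw1 : ∑' i, w i = 1) : IsProbabilityMeasure (bayesMixture Q w) := by
  have hsum : Summable w := by
    by_contra h
    simp [tsum_eq_zero_of_not_summable h] at hw1
  constructor
  simp only [bayesMixture, Measure.sum_apply _ MeasurableSet.univ, Measure.smul_apply,
    measure_univ, smul_eq_mul, mul_one]
  rw [← ENNReal.ofReal_tsum_of_nonneg hw hsum, hw1, ENNReal.ofReal_one]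

lemma absolutelyContinuous_bayesMixture {j : ι} (hw : 0 < w j) : Q j ≪ bayesMixture Q w :=
  Measure.absolutelyContinuous_sum_right j
    (Measure.absolutelyContinuous_smul (ENNReal.ofReal_pos.2 hw).ne')

lemma measureReal_le_bayesMixture [∀ i, IsFiniteMeasure (Q i)]
    [IsFiniteMeasure (bayesMixture Q w)] {j : ι} (hw : 0 < w j) (s : Set (ℕ → X)) :
    (Q j).real s ≤ 1 / w j * (bayesMixture Q w).real s := by
  have hle : ENNReal.ofReal (w j) * Q j s ≤ bayesMixture Q w s :=
    Measure.le_iff'.1 (Measure.le_sum (fun j => ENNReal.ofReal (w j) • Q j) j) s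
  rw [one_div, ← div_eq_inv_mul, le_div_iff₀' hw]
  simpa only [ENNReal.toReal_mul, ENNReal.toReal_ofReal hw.le, ← measureReal_def] using
    ENNReal.toReal_mono (measure_ne_top _ s) hle

lemma tsum_mul_prefProb [MeasurableSingletonClass X] [∀ i, IsFiniteMeasure (Q i)]
    (hw : ∀ i, 0 ≤ w i) (x : ℕ → X) (t : ℕ) :
    ∑' j, w j * prefProb (Q j) x t = (bayesMixture Q w).real (cyl x t) := by
  simp only [measureReal_def, bayesMixture, Measure.sum_apply _ (measurableSet_cyl x t),
    Measure.smul_apply, smul_eq_mul]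
  rw [ENNReal.tsum_toReal_eq fun j => ENNReal.mul_ne_top ENNReal.ofReal_ne_top (measure_ne_top _ _)]
  simp only [ENNReal.toReal_mul, ENNReal.toReal_ofReal (hw _), prefProb]

lemma post_eq_mul_cylRatio [MeasurableSingletonClass X] [∀ i, IsFiniteMeasure (Q i)]
    (hw : ∀ i, 0 ≤ w i) (i : ι) (x : ℕ → X) (t : ℕ) :
    post w Q i x t = w i * cylRatio (Q i) (bayesMixture Q w) t x := by
  rw [post, tsum_mul_prefProb hw, mul_div_assoc]
  rfl

end Mixture

end MergeOrLeave

open MergeOrLeave in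
theorem merge_or_leave_general
    {X : Type*} [Fintype X] [MeasurableSpace X] [MeasurableSingletonClass X]
    {ι : Type*}
    (Q : ι → Measure (ℕ → X)) (hQ : ∀ i, IsProbabilityMeasure (Q i))
    (w : ι → ℝ) (hw : ∀ i, 0 < w i) (hw1 : ∑' i, w i = 1)
    (i₀ : ι) (i : ι) :
    ∀ᵐ x ∂(Q i₀),
      Tendsto (fun t => post w Q i x t) atTop (nhds 0) ∨
      Tendsto (fun t => dTV (Q i₀) (Q i) x t) atTop (nhds 0) := by
  set ξ := bayesMixture Q w
  have : IsProbabilityMeasure ξ := isProbabilityMeasure_bayesMixture hQ (hw · |>.le) hw1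
  have hP : Q i₀ ≪ ξ := absolutelyContinuous_bayesMixture (hw i₀)
  have hQi : Q i ≪ ξ := absolutelyContinuous_bayesMixture (hw i)
  have hC : ∀ j, ∀ s, (Q j).real s ≤ 1 / w j * ξ.real s := fun j =>
    measureReal_le_bayesMixture (hw j)
  filter_upwards [Measure.rnDeriv_pos hP, hP.ae_le (Measure.rnDeriv_lt_top (Q i₀) ξ),
    hP.ae_le (ae_tendsto_cylRatio hP), hP.ae_le (ae_tendsto_cylRatio hQi),
    hP.ae_le (ae_tendsto_cylDeviation hP (one_div_nonneg.2 (hw i₀).le) (hC i₀)),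
    hP.ae_le (ae_tendsto_cylDeviation hQi (one_div_nonneg.2 (hw i).le) (hC i))]
    with x hZP hZPfin hrP hrQ hdP hdQ
  rcases ((Q i).rnDeriv ξ x).toReal_nonneg.eq_or_lt with hZQ | hZQ
  · left
    simpa [post_eq_mul_cylRatio (hw · |>.le), ← hZQ] using hrQ.const_mul (w i)
  · exact Or.inr <|
      tendsto_dTV_zero hP hQi (ENNReal.toReal_pos hZP.ne' hZPfin.ne) hZQ hrP hrQ hdP hdQ

/-- **Merge or Leave.** For each `Q = Q i ∈ ℳ`, with probability 1 over sequences sampled from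
the true measure `P = Q i₀ ∈ ℳ`, either the posterior weight of `Q` tends to `0`, or the
conditional measures of `Q` merge with those of `P` in total variation. -/
theorem merge_or_leave
    {X : Type*} [Fintype X] [Nonempty X] [MeasurableSpace X] [MeasurableSingletonClass X]
    {ι : Type*} [Countable ι]
    (Q : ι → Measure (ℕ → X)) (hQ : ∀ i, IsProbabilityMeasure (Q i))
    (w : ι → ℝ) (hw : ∀ i, 0 < w i) (hw1 : ∑' i, w i = 1)
    (i₀ : ι) (i : ι) :
    ∀ᵐ x ∂(Q i₀),
      Tendsto (fun t => post w Q i x t) atTop (nhds 0) ∨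
      Tendsto (fun t => dTV (Q i₀) (Q i) x t) atTop (nhds 0) :=
  merge_or_leave_general Q hQ w hw hw1 i₀ i
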